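/- arXiv:1903.06311 — 5 statements merged into one kernel-verified Lean document; each statement's English description precedes it below -/
import Mathlib

section
/- Any conditional probability distribution P(x,y|s,t) that admits a decomposition P(x,y|s,t) = Σ_λ P(x|s,λ) P(y|t,λ) P(λ), where all conditional distributions have finitely many values of λ, admits a decomposition of the same form in which each P(x|s,λ) and P(y|t,λ) takes values only in {0,1} (i.e., is deterministic). Equivalently, every classically-realizable bipartite common-cause box is a convex combination of products of deterministic local response functions (Fine's theorem). -/
/-!
Fine's construction: a hidden variable `λ` together with local response distributions
`pA(·|s,λ)`, `pB(·|t,λ)` is refined to the hidden variable `(λ, f, g)`, where `f : S → X` and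
`g : T → Y` are deterministic response functions drawn independently with weights
`∏ s, pA(f s|s,λ)` and `∏ t, pB(g t|t,λ)`. The weight of `f` is a product measure on `S → X`
whose marginal at `s` is `pA(·|s,λ)`, so averaging the deterministic responses recovers the
original box.
-/

open Finset

section ResponseWeight

variable {X S : Type*} [Fintype S]

def responseWeight (h : X → S → ℝ) (f : S → X) : ℝ :=
  ∏ s, h (f s) s

lemma responseWeight_nonneg {h : X → S → ℝ} (hh : ∀ x s, 0 ≤ h x s) (f : S → X) :
    0 ≤ responseWeight h f :=
  prod_nonneg fun s _ => hh (f s) s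

variable [Fintype X] [DecidableEq S] {h : X → S → ℝ}

lemma sum_responseWeight (hh : ∀ s, ∑ x, h x s = 1) : ∑ f, responseWeight h f = 1 :=
  (Fintype.prod_sum fun s x => h x s).symm.trans (by simp only [hh, prod_const_one])

lemma sum_responseWeight_mul_ite [DecidableEq X] (hh : ∀ s, ∑ x, h x s = 1) (x : X) (s : S) :
    ∑ f : S → X, responseWeight h f * (if f s = x then 1 else 0) = h x s := by
  let φ : S → X → ℝ := fun s' y => if s' = s then (if y = x then 1 else 0) else 1
  -- the indicator of `f s = x` is itself a product over `s'`, so the sum over `f` factorizes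
  have hφ : ∀ f : S → X, (if f s = x then 1 else 0) = ∏ s', φ s' (f s') := fun f =>
    (Fintype.prod_ite_eq' s fun s' => if f s' = x then (1 : ℝ) else 0).symm
  calc ∑ f : S → X, responseWeight h f * (if f s = x then 1 else 0)
      = ∑ f : S → X, ∏ s', h (f s') s' * φ s' (f s') := by
        simp only [hφ, responseWeight, ← prod_mul_distrib]
    _ = ∏ s', ∑ y, h y s' * φ s' y := (Fintype.prod_sum fun s' y => h y s' * φ s' y).symm
    _ = h x s := by
        rw [Fintype.prod_eq_single s fun s' hs' => by simp [φ, hs', hh]]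
        simp [φ]

end ResponseWeight

lemma sum_triple_mul_eq_sum_mul_sum {Λ α β : Type*} [Fintype Λ] [Fintype α] [Fintype β]
    (p : Λ → ℝ) (F : Λ → α → ℝ) (G : Λ → β → ℝ) :
    ∑ m : Λ × α × β, F m.1 m.2.1 * G m.1 m.2.2 * p m.1
      = ∑ l, (∑ a, F l a) * (∑ b, G l b) * p l := by
  refine Fintype.sum_prod_type _ |>.trans (sum_congr rfl fun l _ => ?_)
  rw [Fintype.sum_prod_type, sum_mul_sum]
  simp only [sum_mul]

/-- Fine's theorem: any classically-realizable bipartite common-cause box admits a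
decomposition into products of deterministic local response functions. -/
theorem stmt_1 {X Y S T Λ : Type*} [Fintype X] [Fintype Y] [Fintype S] [Fintype T] [Fintype Λ]
    (p : Λ → ℝ) (hp : ∀ l, 0 ≤ p l) (hps : ∑ l, p l = 1)
    (pA : X → S → Λ → ℝ) (hpA : ∀ x s l, 0 ≤ pA x s l) (hpA1 : ∀ s l, ∑ x, pA x s l = 1)
    (pB : Y → T → Λ → ℝ) (hpB : ∀ y t l, 0 ≤ pB y t l) (hpB1 : ∀ t l, ∑ y, pB y t l = 1)
    (P : X → Y → S → T → ℝ)
    (hP : ∀ x y s t, P x y s t = ∑ l, pA x s l * pB y t l * p l) :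
    ∃ (n : ℕ) (q : Fin n → ℝ) (qA : X → S → Fin n → ℝ) (qB : Y → T → Fin n → ℝ),
      (∀ m, 0 ≤ q m) ∧ (∑ m, q m = 1) ∧
      (∀ x s m, qA x s m = 0 ∨ qA x s m = 1) ∧ (∀ s m, ∑ x, qA x s m = 1) ∧
      (∀ y t m, qB y t m = 0 ∨ qB y t m = 1) ∧ (∀ t m, ∑ y, qB y t m = 1) ∧
      (∀ x y s t, P x y s t = ∑ m, qA x s m * qB y t m * q m) := by
  classical
  let M := Λ × (S → X) × (T → Y)
  let e := Fintype.equivFin M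
  let wA : Λ → (S → X) → ℝ := fun l => responseWeight (pA · · l)
  let wB : Λ → (T → Y) → ℝ := fun l => responseWeight (pB · · l)
  let w : M → ℝ := fun m => wA m.1 m.2.1 * wB m.1 m.2.2 * p m.1
  refine ⟨Fintype.card M, fun i => w (e.symm i),
    fun x s i => if (e.symm i).2.1 s = x then 1 else 0,
    fun y t i => if (e.symm i).2.2 t = y then 1 else 0,
    fun i => ?_, ?_, fun x s i => ?_, fun s i => by simp, fun y t i => ?_, fun t i => by simp,
    fun x y s t => ?_⟩
  · exact mul_nonneg (mul_nonneg (responseWeight_nonneg (fun x s => hpA x s _) _)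
      (responseWeight_nonneg (fun y t => hpB y t _) _)) (hp _)
  · rw [Equiv.sum_comp e.symm w, sum_triple_mul_eq_sum_mul_sum]
    simpa only [wA, wB, sum_responseWeight (hpA1 · _), sum_responseWeight (hpB1 · _), one_mul]
  · beta_reduce; split_ifs <;> simp
  · beta_reduce; split_ifs <;> simp
  · rw [Equiv.sum_comp e.symm fun m =>
      (if m.2.1 s = x then 1 else 0) * (if m.2.2 t = y then 1 else 0) * w m]
    calc P x y s t
        = ∑ l, (∑ f, wA l f * (if f s = x then 1 else 0))
            * (∑ g, wB l g * (if g t = y then 1 else 0)) * p l := by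
          simp only [wA, wB, sum_responseWeight_mul_ite (hpA1 · _),
            sum_responseWeight_mul_ite (hpB1 · _), hP]
      _ = _ := by
          rw [← sum_triple_mul_eq_sum_mul_sum]
          exact sum_congr rfl fun m _ => by ring
end

section
/- For the CHSH type (two binary settings and two binary outcomes per wing), any nonfree box R violates exactly one of the eight CHSH inequalities: there is a unique k ∈ {0,…,7} such that CHSH_k(R) > 2, where CHSH_k are the eight sign-variants of the CHSH functional (those with an odd number of minus signs among the four correlator coefficients). -/
open Finset

noncomputable section

/-- A CHSH-type box: `R x y s t = P(x,y|s,t)`. -/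
abbrev Box : Type := Fin 2 → Fin 2 → Fin 2 → Fin 2 → ℝ

def sgn : Fin 2 → ℝ := fun a => if a = 0 then 1 else -1

/-- The two-point correlator `⟨A_s B_t⟩`. -/
def corr (R : Box) (s t : Fin 2) : ℝ := ∑ x, ∑ y, sgn x * sgn y * R x y s t

/-- `R` is a (no-signalling, normalized) box. -/
def IsBox (R : Box) : Prop :=
  (∀ x y s t, 0 ≤ R x y s t) ∧ (∀ s t, ∑ x, ∑ y, R x y s t = 1) ∧
  (∀ x s t t', ∑ y, R x y s t = ∑ y, R x y s t') ∧
  (∀ y t s s', ∑ x, R x y s t = ∑ x, R x y s' t)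

/-- `R` is free (local): a classical common-cause box. -/
def IsFree (R : Box) : Prop :=
  ∃ (n : ℕ) (p : Fin n → ℝ) (qA qB : Fin n → Fin 2 → Fin 2 → ℝ),
    (∀ i, 0 ≤ p i) ∧ (∑ i, p i = 1) ∧
    (∀ i x s, 0 ≤ qA i x s) ∧ (∀ i s, ∑ x, qA i x s = 1) ∧
    (∀ i y t, 0 ≤ qB i y t) ∧ (∀ i t, ∑ y, qB i y t = 1) ∧
    ∀ x y s t, R x y s t = ∑ i, p i * qA i x s * qB i y t

/-- A sign pattern `σ ∈ {±1}^4` with an odd number of `-1` entries. -/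
def IsSignPattern (σ : Fin 2 → Fin 2 → ℝ) : Prop :=
  (∀ s t, σ s t = 1 ∨ σ s t = -1) ∧ σ 0 0 * σ 1 0 * σ 0 1 * σ 1 1 = -1

/-- The CHSH functional with sign pattern `σ`. -/
def CHSHk (σ : Fin 2 → Fin 2 → ℝ) (R : Box) : ℝ := ∑ s, ∑ t, σ s t * corr R s t

/-!
Two distinct sign patterns with an odd number of `-1`s agree in at most two entries, so the sum
of their CHSH values is at most `4`, as `|⟨A_s B_t⟩| ≤ 1`.

That some CHSH inequality is violated is Fine's theorem: if all eight CHSH values are at most `2`,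
there is a joint distribution of `(A₀, A₁, B₀, B₁)` reproducing `R`, so `R` is free. For each
setting `t` of Bob, a distribution of `(A₀, A₁, B_t)` with the observed pair marginals is fixed by
the numbers `P(A₀ = 0, A₁ = 0, B_t = b)`, which range over Fréchet intervals; the CHSH inequalities
say exactly that they can be chosen so that the `(A₀, A₁)`-marginal is the same for `t = 0` and
`t = 1`. The two distributions are then glued conditionally independently given `(A₀, A₁)`.
-/

section

variable {R : Box}

lemma corr_eq (R : Box) (s t : Fin 2) :
    corr R s t = R 0 0 s t - R 0 1 s t - R 1 0 s t + R 1 1 s t := by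
  simp only [corr, sgn, Fin.sum_univ_two]
  norm_num
  ring

lemma CHSHk_eq (σ : Fin 2 → Fin 2 → ℝ) (R : Box) :
    CHSHk σ R =
      σ 0 0 * corr R 0 0 + σ 0 1 * corr R 0 1 + σ 1 0 * corr R 1 0 + σ 1 1 * corr R 1 1 := by
  simp only [CHSHk, Fin.sum_univ_two]
  ring

lemma IsBox.abs_corr_le_one (hR : IsBox R) (s t : Fin 2) : |corr R s t| ≤ 1 := by
  have hsum := hR.2.1 s t
  simp only [Fin.sum_univ_two] at hsum
  rw [corr_eq, abs_le]
  constructor <;> linarith [hR.1 0 0 s t, hR.1 0 1 s t, hR.1 1 0 s t, hR.1 1 1 s t]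

lemma add_mul_le_one_add_mul {σ τ c : ℝ} (hσ : σ = 1 ∨ σ = -1) (hτ : τ = 1 ∨ τ = -1)
    (hc : |c| ≤ 1) : (σ + τ) * c ≤ 1 + σ * τ := by
  rw [abs_le] at hc
  rcases hσ with rfl | rfl <;> rcases hτ with rfl | rfl <;> linarith

lemma add_add_add_nonpos_of_mul_eq_one {a b c d : ℝ} (ha : a = 1 ∨ a = -1) (hb : b = 1 ∨ b = -1)
    (hc : c = 1 ∨ c = -1) (hd : d = 1 ∨ d = -1) (h : a * b * c * d = 1)
    (hne : ¬(a = 1 ∧ b = 1 ∧ c = 1 ∧ d = 1)) : a + b + c + d ≤ 0 := by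
  rcases ha with rfl | rfl <;> rcases hb with rfl | rfl <;> rcases hc with rfl | rfl <;>
    rcases hd with rfl | rfl <;> norm_num at *

lemma eq_of_mul_eq_one_of_pm_one {σ τ : ℝ} (hσ : σ = 1 ∨ σ = -1) (hτ : τ = 1 ∨ τ = -1)
    (h : σ * τ = 1) : σ = τ := by
  rcases hσ with rfl | rfl <;> rcases hτ with rfl | rfl <;> norm_num at *

lemma mul_eq_one_or_neg_one {σ τ : ℝ} (hσ : σ = 1 ∨ σ = -1) (hτ : τ = 1 ∨ τ = -1) :
    σ * τ = 1 ∨ σ * τ = -1 := by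
  rcases hσ with rfl | rfl <;> rcases hτ with rfl | rfl <;> norm_num

namespace IsSignPattern

variable {σ τ : Fin 2 → Fin 2 → ℝ}

lemma sum_mul_nonpos (hσ : IsSignPattern σ) (hτ : IsSignPattern τ) (hne : σ ≠ τ) :
    ∑ s, ∑ t, σ s t * τ s t ≤ 0 := by
  have hsign s t := mul_eq_one_or_neg_one (hσ.1 s t) (hτ.1 s t)
  simp only [Fin.sum_univ_two, ← add_assoc]
  refine add_add_add_nonpos_of_mul_eq_one (hsign 0 0) (hsign 0 1) (hsign 1 0) (hsign 1 1) ?_ ?_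
  · linear_combination (σ 0 0 * σ 1 0 * σ 0 1 * σ 1 1) * hτ.2 - hσ.2
  · rintro ⟨h00, h01, h10, h11⟩
    refine hne (funext fun s => funext fun t => ?_)
    fin_cases s <;> fin_cases t <;> exact eq_of_mul_eq_one_of_pm_one (hσ.1 _ _) (hτ.1 _ _) ‹_›

lemma CHSHk_add_CHSHk_le_four (hR : IsBox R) (hσ : IsSignPattern σ)
    (hτ : IsSignPattern τ) (hne : σ ≠ τ) : CHSHk σ R + CHSHk τ R ≤ 4 := by
  calc CHSHk σ R + CHSHk τ R = ∑ s, ∑ t, (σ s t + τ s t) * corr R s t := by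
        simp only [CHSHk, ← Finset.sum_add_distrib, add_mul]
    _ ≤ ∑ s, ∑ t, (1 + σ s t * τ s t) := by
        gcongr with s _ t _
        exact add_mul_le_one_add_mul (hσ.1 s t) (hτ.1 s t) (hR.abs_corr_le_one s t)
    _ = 4 + ∑ s, ∑ t, σ s t * τ s t := by
        simp only [Fin.sum_univ_two]
        ring
    _ ≤ 4 := by linarith [sum_mul_nonpos hσ hτ hne]

end IsSignPattern

lemma sum_fin_two_arrow_ite_apply_zero {α M : Type*} [Fintype α] [DecidableEq α] [AddCommMonoid M]
    (F : α → α → M) (x : α) :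
    ∑ a : Fin 2 → α, (if a 0 = x then F (a 0) (a 1) else 0) = ∑ a₁, F x a₁ := by
  rw [← (finTwoArrowEquiv α).symm.sum_comp, Fintype.sum_prod_type]
  simp [Finset.sum_ite_irrel]

lemma sum_fin_two_arrow_ite_apply_one {α M : Type*} [Fintype α] [DecidableEq α] [AddCommMonoid M]
    (F : α → α → M) (x : α) :
    ∑ a : Fin 2 → α, (if a 1 = x then F (a 0) (a 1) else 0) = ∑ a₀, F a₀ x := by
  rw [← (finTwoArrowEquiv α).symm.sum_comp, Fintype.sum_prod_type]
  simp

/-- Conditionally independent gluing `Q a b c = T₀ a b * T₁ a c / M a`; where the common marginal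
`M a` vanishes, so do `T₀ a ·` and `T₁ a ·`, and `x / 0 = 0` keeps the formula valid. -/
lemma exists_coupling {α β γ : Type*} [Fintype β] [Fintype γ] (T₀ : α → β → ℝ) (T₁ : α → γ → ℝ)
    (hT₀ : ∀ a b, 0 ≤ T₀ a b) (hT₁ : ∀ a c, 0 ≤ T₁ a c) (hT : ∀ a, ∑ b, T₀ a b = ∑ c, T₁ a c) :
    ∃ Q : α → β → γ → ℝ, (∀ a b c, 0 ≤ Q a b c) ∧ (∀ a b, ∑ c, Q a b c = T₀ a b) ∧
      ∀ a c, ∑ b, Q a b c = T₁ a c := by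
  refine ⟨fun a b c => T₀ a b * T₁ a c / ∑ b, T₀ a b, fun a b c => ?_, fun a b => ?_, fun a c => ?_⟩
  · exact div_nonneg (mul_nonneg (hT₀ a b) (hT₁ a c)) (Finset.sum_nonneg fun b _ => hT₀ a b)
  · by_cases hM : ∑ b, T₀ a b = 0
    · simp [(Finset.sum_eq_zero_iff_of_nonneg fun b _ => hT₀ a b).1 hM b (Finset.mem_univ _)]
    · rw [← Finset.sum_div, ← Finset.mul_sum, ← hT, mul_div_assoc, div_self hM, mul_one]
  · by_cases hM : ∑ b, T₀ a b = 0
    · rw [hT] at hM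
      simp [(Finset.sum_eq_zero_iff_of_nonneg fun c _ => hT₁ a c).1 hM c (Finset.mem_univ _)]
    · rw [← Finset.sum_div, ← Finset.sum_mul, mul_div_cancel_left₀ _ hM]

lemma exists_add_eq_of_le {l u : Fin 2 → ℝ} {Z : ℝ} (hlu : ∀ b, l b ≤ u b) (hl : l 0 + l 1 ≤ Z)
    (hu : Z ≤ u 0 + u 1) : ∃ z : Fin 2 → ℝ, z 0 + z 1 = Z ∧ ∀ b, l b ≤ z b ∧ z b ≤ u b := by
  refine ⟨![min (u 0) (Z - l 1), Z - min (u 0) (Z - l 1)], by simp, Fin.forall_fin_two.2 ⟨?_, ?_⟩⟩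
  · exact ⟨le_min (hlu 0) (by linarith), min_le_left _ _⟩
  · have := hlu 1
    constructor <;> simp only [Matrix.cons_val_one, Matrix.cons_val_zero]
    · linarith [min_le_right (u 0) (Z - l 1)]
    · linarith [le_min (show Z - u 1 ≤ u 0 by linarith) (show Z - u 1 ≤ Z - l 1 by linarith)]

lemma exists_table_of_sums {r c : Fin 2 → ℝ} {z : ℝ} (hrc : r 0 + r 1 = c 0 + c 1)
    (hl : max 0 (r 0 - c 1) ≤ z) (hu : z ≤ min (r 0) (c 0)) :
    ∃ T : Fin 2 → Fin 2 → ℝ, (∀ i j, 0 ≤ T i j) ∧ (∀ i, ∑ j, T i j = r i) ∧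
      (∀ j, ∑ i, T i j = c j) ∧ T 0 0 = z := by
  rw [max_le_iff] at hl
  rw [le_min_iff] at hu
  refine ⟨![![z, r 0 - z], ![c 0 - z, r 1 - c 0 + z]], ?_, ?_, ?_, rfl⟩ <;>
    simp only [Fin.forall_fin_two, Fin.sum_univ_two, Matrix.cons_val_zero, Matrix.cons_val_one]
  · refine ⟨⟨?_, ?_⟩, ?_, ?_⟩ <;> linarith
  · constructor <;> ring
  · constructor <;> linarith

lemma table_eq_of_sums {T T' : Fin 2 → Fin 2 → ℝ} (hr : ∀ i, ∑ j, T i j = ∑ j, T' i j)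
    (hc : ∀ j, ∑ i, T i j = ∑ i, T' i j) (h : T 0 0 = T' 0 0) : T = T' := by
  simp only [Fin.sum_univ_two] at hr hc
  refine funext fun i => funext fun j => ?_
  fin_cases i <;> fin_cases j <;> simp only [Fin.zero_eta, Fin.mk_one] <;>
    linarith [hr 0, hr 1, hc 0]

lemma isFree_of_fintype (h₁ : ∑ x, ∑ y, R x y 0 0 = 1) {ι : Type*} [Fintype ι]
    (p : ι → ℝ) (qA qB : ι → Fin 2 → Fin 2 → ℝ) (hp : ∀ i, 0 ≤ p i)
    (hqA : ∀ i x s, 0 ≤ qA i x s) (hqA₁ : ∀ i s, ∑ x, qA i x s = 1)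
    (hqB : ∀ i y t, 0 ≤ qB i y t) (hqB₁ : ∀ i t, ∑ y, qB i y t = 1)
    (hR : ∀ x y s t, R x y s t = ∑ i, p i * qA i x s * qB i y t) : IsFree R := by
  have hp₁ : ∑ i, p i = 1 := by
    calc ∑ i, p i = ∑ i, p i * (∑ x, qA i x 0) * ∑ y, qB i y 0 := by simp [hqA₁, hqB₁]
      _ = ∑ x, ∑ y, R x y 0 0 := by
        simp only [hR, Finset.mul_sum, Finset.sum_mul]
        rw [Finset.sum_comm_cycle]
        exact Finset.sum_congr rfl fun _ _ => Finset.sum_comm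
      _ = 1 := h₁
  let e := Fintype.equivFin ι
  refine ⟨Fintype.card ι, p ∘ e.symm, qA ∘ e.symm, qB ∘ e.symm, fun i => hp _,
    (e.symm.sum_comp p).trans hp₁, fun i => hqA _, fun i => hqA₁ _, fun i => hqB _, fun i => hqB₁ _,
    fun x y s t => ?_⟩
  rw [hR]
  exact (e.symm.sum_comp (fun i => p i * qA i x s * qB i y t)).symm

lemma isSignPattern_of {a b c d : ℝ}
    (h : (a = 1 ∨ a = -1) ∧ (b = 1 ∨ b = -1) ∧ (c = 1 ∨ c = -1) ∧ (d = 1 ∨ d = -1) ∧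
      a * c * b * d = -1) :
    IsSignPattern ![![a, b], ![c, d]] := by
  obtain ⟨ha, hb, hc, hd, h⟩ := h
  refine ⟨fun s t => ?_, by simpa using h⟩
  fin_cases s <;> fin_cases t <;> simpa

/-- The Fréchet bounds on `P(A₀ = 0, A₁ = 0, B_t = b)` given the observed distributions of
`(A₀, B_t)` and `(A₁, B_t)`. -/
def fineLower (R : Box) (t b : Fin 2) : ℝ := max 0 (R 0 b 0 t - R 1 b 1 t)

def fineUpper (R : Box) (t b : Fin 2) : ℝ := min (R 0 b 0 t) (R 0 b 1 t)

lemma fineLower_le_fineUpper (hR : IsBox R) (t b : Fin 2) : fineLower R t b ≤ fineUpper R t b := by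
  have hB := hR.2.2.2 b t 0 1
  simp only [Fin.sum_univ_two] at hB
  exact max_le (le_min (hR.1 0 b 0 t) (hR.1 0 b 1 t))
    (le_min (by linarith [hR.1 1 b 1 t]) (by linarith [hR.1 1 b 0 t]))

lemma fineLower_add_le_fineUpper_add (hR : IsBox R)
    (hCHSH : ∀ σ, IsSignPattern σ → CHSHk σ R ≤ 2) (t t' : Fin 2) :
    fineLower R t 0 + fineLower R t 1 ≤ fineUpper R t' 0 + fineUpper R t' 1 := by
  have k₁ := hCHSH _ (isSignPattern_of (a := 1) (b := 1) (c := 1) (d := -1) (by norm_num))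
  have k₂ := hCHSH _ (isSignPattern_of (a := 1) (b := 1) (c := -1) (d := 1) (by norm_num))
  have k₃ := hCHSH _ (isSignPattern_of (a := 1) (b := -1) (c := 1) (d := 1) (by norm_num))
  have k₄ := hCHSH _ (isSignPattern_of (a := -1) (b := 1) (c := 1) (d := 1) (by norm_num))
  have k₅ := hCHSH _ (isSignPattern_of (a := -1) (b := -1) (c := -1) (d := 1) (by norm_num))
  have k₆ := hCHSH _ (isSignPattern_of (a := -1) (b := -1) (c := 1) (d := -1) (by norm_num))
  have k₇ := hCHSH _ (isSignPattern_of (a := -1) (b := 1) (c := -1) (d := -1) (by norm_num))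
  have k₈ := hCHSH _ (isSignPattern_of (a := 1) (b := -1) (c := -1) (d := -1) (by norm_num))
  simp only [CHSHk_eq, corr_eq] at k₁ k₂ k₃ k₄ k₅ k₆ k₇ k₈
  norm_num at k₁ k₂ k₃ k₄ k₅ k₆ k₇ k₈
  obtain ⟨hpos, hsum, hA, hB⟩ := hR
  simp only [Fin.forall_fin_two, Fin.sum_univ_two] at hpos hsum hA hB
  casesm* _ ∧ _
  revert t t'
  simp only [Fin.forall_fin_two, fineLower, fineUpper, max_def, min_def]
  refine ⟨⟨?_, ?_⟩, ?_, ?_⟩ <;> split_ifs <;> linarith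

/-- `T t b i j` is a joint distribution of `(A₀, A₁, B_t)` at `(i, j, b)`; the last clause says
that its `(A₀, A₁)`-marginal does not depend on `t`. -/
lemma exists_tables_of_CHSHk_le_two (hR : IsBox R)
    (hCHSH : ∀ σ, IsSignPattern σ → CHSHk σ R ≤ 2) :
    ∃ T : Fin 2 → Fin 2 → Fin 2 → Fin 2 → ℝ, (∀ t b i j, 0 ≤ T t b i j) ∧
      (∀ t b i, ∑ j, T t b i j = R i b 0 t) ∧ (∀ t b j, ∑ i, T t b i j = R j b 1 t) ∧
      ∀ i j, ∑ b, T 0 b i j = ∑ b, T 1 b i j := by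
  -- the common value of `P(A₀ = 0, A₁ = 0)`
  set Z := max (fineLower R 0 0 + fineLower R 0 1) (fineLower R 1 0 + fineLower R 1 1)
  have hz (t : Fin 2) : ∃ z : Fin 2 → ℝ, z 0 + z 1 = Z ∧
      ∀ b, fineLower R t b ≤ z b ∧ z b ≤ fineUpper R t b := by
    refine exists_add_eq_of_le (fineLower_le_fineUpper hR t) ?_
      (max_le (fineLower_add_le_fineUpper_add hR hCHSH 0 t)
        (fineLower_add_le_fineUpper_add hR hCHSH 1 t))
    fin_cases t
    exacts [le_max_left _ _, le_max_right _ _]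
  choose z hzZ hz using hz
  have hT (t b : Fin 2) : ∃ T : Fin 2 → Fin 2 → ℝ, (∀ i j, 0 ≤ T i j) ∧
      (∀ i, ∑ j, T i j = R i b 0 t) ∧ (∀ j, ∑ i, T i j = R j b 1 t) ∧ T 0 0 = z t b :=
    exists_table_of_sums (by simpa [Fin.sum_univ_two] using hR.2.2.2 b t 0 1) (hz t b).1
      (hz t b).2
  choose T hT₀ hTrow hTcol hT00 using hT
  refine ⟨T, hT₀, hTrow, hTcol, congrFun₂ (table_eq_of_sums (fun i => ?_) (fun j => ?_) ?_)⟩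
  · calc ∑ j, ∑ b, T 0 b i j = ∑ b, R i b 0 0 := by rw [Finset.sum_comm]; simp only [hTrow]
      _ = ∑ b, R i b 0 1 := hR.2.2.1 i 0 0 1
      _ = ∑ j, ∑ b, T 1 b i j := by rw [Finset.sum_comm]; simp only [hTrow]
  · calc ∑ i, ∑ b, T 0 b i j = ∑ b, R j b 1 0 := by rw [Finset.sum_comm]; simp only [hTcol]
      _ = ∑ b, R j b 1 1 := hR.2.2.1 j 1 0 1
      _ = ∑ i, ∑ b, T 1 b i j := by rw [Finset.sum_comm]; simp only [hTcol]
  · simp only [hT00, Fin.sum_univ_two, hzZ]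

theorem exists_joint_of_CHSHk_le_two (hR : IsBox R)
    (hCHSH : ∀ σ, IsSignPattern σ → CHSHk σ R ≤ 2) :
    ∃ q : (Fin 2 → Fin 2) × (Fin 2 → Fin 2) → ℝ, (∀ i, 0 ≤ q i) ∧ ∀ x y s t,
      R x y s t = ∑ i, q i * (if i.1 s = x then 1 else 0) * (if i.2 t = y then 1 else 0) := by
  obtain ⟨T, hT, hTrow, hTcol, hM⟩ := exists_tables_of_CHSHk_le_two hR hCHSH
  obtain ⟨Q, hQ, hQ₀, hQ₁⟩ := exists_coupling (fun (a : Fin 2 → Fin 2) b => T 0 b (a 0) (a 1))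
    (fun (a : Fin 2 → Fin 2) b => T 1 b (a 0) (a 1)) (fun _ _ => hT _ _ _ _)
    (fun _ _ => hT _ _ _ _) (fun a => hM (a 0) (a 1))
  refine ⟨fun i => Q i.1 (i.2 0) (i.2 1), fun i => hQ _ _ _, fun x y s t => ?_⟩
  have hBob (a : Fin 2 → Fin 2) :
      ∑ b : Fin 2 → Fin 2, (if b t = y then Q a (b 0) (b 1) else 0) = T t y (a 0) (a 1) := by
    fin_cases t
    · exact (sum_fin_two_arrow_ite_apply_zero (Q a) y).trans (hQ₀ a y)
    · exact (sum_fin_two_arrow_ite_apply_one (Q a) y).trans (hQ₁ a y)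
  have hAlice : ∑ a : Fin 2 → Fin 2, (if a s = x then T t y (a 0) (a 1) else 0) = R x y s t := by
    fin_cases s
    · exact (sum_fin_two_arrow_ite_apply_zero (T t y) x).trans (hTrow t y x)
    · exact (sum_fin_two_arrow_ite_apply_one (T t y) x).trans (hTcol t y x)
  rw [← hAlice, Fintype.sum_prod_type]
  simp only [← hBob, mul_boole]
  refine Finset.sum_congr rfl fun a _ => ?_
  by_cases h : a s = x <;> simp [h]

theorem isFree_of_CHSHk_le_two (hR : IsBox R) (hCHSH : ∀ σ, IsSignPattern σ → CHSHk σ R ≤ 2) :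
    IsFree R := by
  obtain ⟨q, hq, hrep⟩ := exists_joint_of_CHSHk_le_two hR hCHSH
  refine isFree_of_fintype (hR.2.1 0 0) q (fun i x s => if i.1 s = x then 1 else 0)
    (fun i y t => if i.2 t = y then 1 else 0) hq (fun _ _ _ => ?_) (fun _ _ => by simp)
    (fun _ _ _ => ?_) (fun _ _ => by simp) hrep <;> split_ifs <;> norm_num

end

/-- A nonfree CHSH-type box violates exactly one of the eight CHSH inequalities. -/
theorem stmt_7 (R : Box) (hR : IsBox R) (hnf : ¬ IsFree R) :
    ∃! σ : Fin 2 → Fin 2 → ℝ, IsSignPattern σ ∧ 2 < CHSHk σ R := by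
  obtain ⟨σ, hσ, hσR⟩ : ∃ σ, IsSignPattern σ ∧ 2 < CHSHk σ R := by
    by_contra! h
    exact hnf (isFree_of_CHSHk_le_two hR h)
  refine ⟨σ, ⟨hσ, hσR⟩, fun τ ⟨hτ, hτR⟩ => by_contra fun hne => ?_⟩
  linarith [hτ.CHSHk_add_CHSHk_le_four hR hσ hne]

end
end

section
/- Every CHSH-type box R satisfying CHSH(R) ≥ 2 admits a convex decomposition R = λ·R_PR + (1−λ)·L, where R_PR is the canonical PR box, L is a free (local) box saturating the CHSH inequality (CHSH(L) = 2), and λ = (CHSH(R) − 2)/2. -/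
open Finset

noncomputable section

/-- The canonical CHSH functional. -/
def CHSH (R : Box) : ℝ := corr R 0 0 + corr R 1 0 + corr R 0 1 - corr R 1 1

/-- The canonical PR box: `P(x,y|s,t) = 1/2` if `x ⊕ y = s·t`, else `0`. -/
def PRbox : Box := fun x y s t => if x + y = s * t then 1/2 else 0

/-! The eight deterministic strategies that lose the CHSH game on exactly one input pair all have
CHSH value 2, and each is singled out by the losing answer it gives there. Together with the PR box
they form an affine basis of the 8-dimensional space of normalized no-signalling boxes, so every
such `R` is `λ • PRbox + ∑ wᵢ • Dᵢ`, where `wᵢ` is the probability that `R` gives the losing answer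
of `Dᵢ` (the PR box never loses) and `λ = (CHSH R - 2) / 2`. Positivity of `R` makes the `wᵢ`
nonnegative, they sum to the total losing probability `1 - λ`, and normalizing `∑ wᵢ • Dᵢ` gives
the free CHSH-saturating box `L`. -/

def detBox (a b : Fin 2 → Fin 2) : Box :=
  fun x y s t => (if x = a s then 1 else 0) * (if y = b t then 1 else 0)

theorem isFree_sum_mul_detBox {ι : Type*} [Fintype ι] (p : ι → ℝ) (a b : ι → Fin 2 → Fin 2)
    (hp : ∀ i, 0 ≤ p i) (hp1 : ∑ i, p i = 1) :
    IsFree fun x y s t => ∑ i, p i * detBox (a i) (b i) x y s t := by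
  let e := Fintype.equivFin ι
  refine ⟨Fintype.card ι, p ∘ e.symm, fun i x s => if x = a (e.symm i) s then 1 else 0,
    fun i y t => if y = b (e.symm i) t then 1 else 0, fun i => hp _, ?_, ?_, ?_, ?_, ?_, ?_⟩
  · rwa [Function.comp_def, e.symm.sum_comp]
  · intro i x s; positivity
  · intro i s; simp
  · intro i y t; positivity
  · intro i t; simp
  · intro x y s t
    simp only [detBox, Function.comp_apply, mul_assoc]
    exact (e.symm.sum_comp fun i => p i * _).symm

theorem CHSH_sum_mul {ι : Type*} [Fintype ι] (p : ι → ℝ) (D : ι → Box) :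
    CHSH (fun x y s t => ∑ i, p i * D i x y s t) = ∑ i, p i * CHSH (D i) := by
  simp only [CHSH, corr, Fin.sum_univ_two, Finset.mul_sum, ← Finset.sum_add_distrib,
    ← Finset.sum_sub_distrib]
  exact Finset.sum_congr rfl fun i _ => by ring

theorem exists_eq_sum_mul_of_nonneg {ι : Type*} [Fintype ι] [Nonempty ι] (w : ι → ℝ)
    (hw : ∀ i, 0 ≤ w i) :
    ∃ p : ι → ℝ, (∀ i, 0 ≤ p i) ∧ ∑ i, p i = 1 ∧ ∀ i, w i = (∑ j, w j) * p i := by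
  by_cases hS : ∑ j, w j = 0
  · have hw0 := (Finset.sum_eq_zero_iff_of_nonneg fun i _ => hw i).1 hS
    refine ⟨fun _ => (Fintype.card ι : ℝ)⁻¹, fun _ => by positivity, ?_, fun i => ?_⟩
    · simp
    · simp [hS, hw0 i (Finset.mem_univ i)]
  · refine ⟨fun i => w i / ∑ j, w j,
      fun i => div_nonneg (hw i) (Finset.sum_nonneg fun j _ => hw j), ?_, fun i => ?_⟩
    · rw [← Finset.sum_div, div_self hS]
    · field_simp

theorem exists_isFree_CHSH_eq_two_of_sum_mul_detBox {ι : Type*} [Fintype ι] [Nonempty ι]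
    (w : ι → ℝ) (a b : ι → Fin 2 → Fin 2) (hw : ∀ i, 0 ≤ w i)
    (hsat : ∀ i, CHSH (detBox (a i) (b i)) = 2) :
    ∃ L : Box, IsFree L ∧ CHSH L = 2 ∧
      ∀ x y s t, ∑ i, w i * detBox (a i) (b i) x y s t = (∑ i, w i) * L x y s t := by
  obtain ⟨p, hp, hp1, hwp⟩ := exists_eq_sum_mul_of_nonneg w hw
  refine ⟨fun x y s t => ∑ i, p i * detBox (a i) (b i) x y s t,
    isFree_sum_mul_detBox p a b hp hp1, ?_, fun x y s t => ?_⟩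
  · simp only [CHSH_sum_mul, hsat, ← Finset.sum_mul, hp1, one_mul]
  · rw [Finset.mul_sum]
    exact Finset.sum_congr rfl fun i _ => by rw [hwp i, mul_assoc]

/-- The index `(x, s, t)` stands for the losing answer `(x, x + s * t + 1)` to the input `(s, t)`;
`lossStrategyA` and `lossStrategyB` win on every other input and give that answer on `(s, t)`. -/
def lossWeight (R : Box) : Fin 2 × Fin 2 × Fin 2 → ℝ
  | (x, s, t) => R x (x + s * t + 1) s t

def lossStrategyA : Fin 2 × Fin 2 × Fin 2 → Fin 2 → Fin 2
  | (x, s, t) => fun s' => if s' = s then x else x + t + 1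

def lossStrategyB : Fin 2 × Fin 2 × Fin 2 → Fin 2 → Fin 2
  | (x, s, t) => fun t' => if t' = t then x + s * t + 1 else x + s * t'

theorem CHSH_detBox_lossStrategy (i : Fin 2 × Fin 2 × Fin 2) :
    CHSH (detBox (lossStrategyA i) (lossStrategyB i)) = 2 := by
  obtain ⟨x, s, t⟩ := i
  fin_cases x <;> fin_cases s <;> fin_cases t <;>
    simp [CHSH, corr, sgn, detBox, lossStrategyA, lossStrategyB] <;> norm_num

section
variable {R : Box} (hnorm : ∀ s t, ∑ x, ∑ y, R x y s t = 1)
  (hA : ∀ x s t t', ∑ y, R x y s t = ∑ y, R x y s t')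
  (hB : ∀ y t s s', ∑ x, R x y s t = ∑ x, R x y s' t)

include hnorm in
theorem sum_lossWeight : ∑ i, lossWeight R i = 1 - (CHSH R - 2) / 2 := by
  have h00 := hnorm 0 0
  have h01 := hnorm 0 1
  have h10 := hnorm 1 0
  have h11 := hnorm 1 1
  simp only [Fin.sum_univ_two] at h00 h01 h10 h11
  simp only [Fintype.sum_prod_type, Fin.sum_univ_two, lossWeight, Fin.reduceAdd, Fin.reduceMul,
    CHSH, corr, sgn]
  norm_num
  linarith

include hnorm hA hB in
theorem eq_PRbox_add_sum_lossWeight (x y s t : Fin 2) :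
    R x y s t = (CHSH R - 2) / 2 * PRbox x y s t +
      ∑ i, lossWeight R i * detBox (lossStrategyA i) (lossStrategyB i) x y s t := by
  have n00 := hnorm 0 0
  have n01 := hnorm 0 1
  have n10 := hnorm 1 0
  have n11 := hnorm 1 1
  have a00 := hA 0 0 0 1
  have a01 := hA 0 1 0 1
  have a10 := hA 1 0 0 1
  have a11 := hA 1 1 0 1
  have b00 := hB 0 0 0 1
  have b01 := hB 0 1 0 1
  have b10 := hB 1 0 0 1
  have b11 := hB 1 1 0 1
  simp only [Fin.sum_univ_two] at *
  fin_cases x <;> fin_cases y <;> fin_cases s <;> fin_cases t <;>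
    simp [Fintype.sum_prod_type, lossWeight, lossStrategyA, lossStrategyB, detBox, CHSH, corr, sgn,
      PRbox] <;> linarith
end

theorem stmt_8_general (R : Box) (hR : IsBox R) :
    ∃ L : Box, IsFree L ∧ CHSH L = 2 ∧
      ∀ x y s t, R x y s t =
        ((CHSH R - 2) / 2) * PRbox x y s t + (1 - (CHSH R - 2) / 2) * L x y s t := by
  obtain ⟨hpos, hnorm, hA, hB⟩ := hR
  obtain ⟨L, hfree, hL2, hL⟩ := exists_isFree_CHSH_eq_two_of_sum_mul_detBox (lossWeight R)
    lossStrategyA lossStrategyB (fun _ => hpos _ _ _ _) CHSH_detBox_lossStrategy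
  refine ⟨L, hfree, hL2, fun x y s t => ?_⟩
  rw [eq_PRbox_add_sum_lossWeight hnorm hA hB x y s t, hL, sum_lossWeight hnorm]

/-- Every CHSH-type box with `CHSH(R) ≥ 2` decomposes as `λ·R_PR + (1−λ)·L` with `L`
free and CHSH-saturating, where `λ = (CHSH(R) − 2)/2`. -/
theorem stmt_8 (R : Box) (hR : IsBox R) (hchsh : 2 ≤ CHSH R) :
    ∃ L : Box, IsFree L ∧ CHSH L = 2 ∧
      ∀ x y s t, R x y s t =
        ((CHSH R - 2) / 2) * PRbox x y s t + (1 - (CHSH R - 2) / 2) * L x y s t :=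
  stmt_8_general R hR
end
end

section
/- Every locally deterministic type-preserving operation on CHSH-type boxes that is not a local symmetry operation maps every no-signalling box to a free (local) box. Consequently, a nonfree CHSH-type box has no preimage among CHSH-type boxes under any deterministic nonsymmetry operation. -/
open Finset

noncomputable section

/-- The action of a type-preserving locally deterministic operation
`(f_A, g_A, f_B, g_B)` on a CHSH-type box. -/
def applyDet (fA fB : Fin 2 → Fin 2) (gA gB : Fin 2 → Fin 2 → Fin 2) (R : Box) : Box :=
  fun x' y' s' t' => ∑ x, ∑ y,
    (if gA x s' = x' then 1 else 0) * (if gB y t' = y' then 1 else 0) *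
      R x y (fA s') (fB t')

/-!
If an operation is not a local symmetry then, on one side (say Alice's), either the input map
is constant or the output map is constant on some input. In the second case no-signalling lets us
change which input of `R` is used there, so in both cases Alice reads `R` on one fixed input and
relabels the outcome deterministically. That raw outcome is a hidden variable: Alice's outputs are
functions of it and Bob's are distributed as `R` conditioned on it, which is a local model. Bob's
side follows by exchanging the parties.
-/

lemma Fin.two_eq_const_of_not_bijective {f : Fin 2 → Fin 2} (h : ¬ Function.Bijective f) :
    ∀ i, f i = f 0 := by
  revert f; decide

lemma sum_sum_ite_eq_mul {α β M : Type*} [Fintype α] [Fintype β] [DecidableEq β]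
    [NonAssocSemiring M] (g : α → β) (f : α → M) :
    ∑ b, ∑ a, (if g a = b then 1 else 0) * f a = ∑ a, f a := by
  rw [sum_comm]
  simp only [ite_mul, one_mul, zero_mul, sum_ite_eq, mem_univ, if_true]

lemma isFree_of_eq_sum_ite_mul {n : ℕ} (α : Fin n → Fin 2 → Fin 2)
    (B : Fin n → Fin 2 → Fin 2 → ℝ)
    (hB : ∀ l y t, 0 ≤ B l y t) (hB_ns : ∀ l t t', ∑ y, B l y t = ∑ y, B l y t')
    (hB_sum : ∑ l, ∑ y, B l y 0 = 1) {Q : Box}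
    (hQ : ∀ x y s t, Q x y s t = ∑ l, (if α l s = x then 1 else 0) * B l y t) :
    IsFree Q := by
  set p : Fin n → ℝ := fun l => ∑ y, B l y 0
  have hp : ∀ l, 0 ≤ p l := fun l => sum_nonneg fun y _ => hB l y 0
  -- Bob's conditional distribution given `l`; when `p l = 0` any distribution will do.
  set qB : Fin n → Fin 2 → Fin 2 → ℝ := fun l y t =>
    if p l = 0 then (if y = 0 then 1 else 0) else B l y t / p l
  have hpqB : ∀ l y t, p l * qB l y t = B l y t := by
    intro l y t
    by_cases h : p l = 0
    · have hsum : ∑ y, B l y t = 0 := (hB_ns l t 0).trans h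
      simp [h, (sum_eq_zero_iff_of_nonneg fun y _ => hB l y t).1 hsum y (mem_univ y)]
    · simp [qB, h, mul_div_cancel₀]
  refine ⟨n, p, fun l x s => if α l s = x then 1 else 0, qB, hp, hB_sum,
    fun l x s => by positivity, fun l s => by simp, ?_, ?_, ?_⟩
  · intro l y t
    by_cases h : p l = 0
    · simp only [qB, if_pos h]; positivity
    · simp only [qB, if_neg h]; exact div_nonneg (hB l y t) (hp l)
  · intro l t
    by_cases h : p l = 0
    · simp [qB, h]
    · simp only [qB, if_neg h, ← sum_div, hB_ns l t 0]
      exact div_self h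
  · intro x y s t
    rw [hQ]
    refine sum_congr rfl fun l _ => ?_
    rw [← hpqB l y t]
    ring

def Box.swap (R : Box) : Box := fun x y s t => R y x t s

lemma IsBox.swap {R : Box} (hR : IsBox R) : IsBox R.swap := by
  obtain ⟨hpos, hnorm, hnsA, hnsB⟩ := hR
  exact ⟨fun x y s t => hpos y x t s, fun s t => (sum_comm).trans (hnorm t s),
    fun x s t t' => hnsB x s t t', fun y t s s' => hnsA y t s s'⟩

lemma IsFree.swap {R : Box} (hR : IsFree R) : IsFree R.swap := by
  obtain ⟨n, p, qA, qB, hp, hps, hqA, hqAs, hqB, hqBs, hR⟩ := hR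
  refine ⟨n, p, qB, qA, hp, hps, hqB, hqBs, hqA, hqAs, fun x y s t => ?_⟩
  simp only [Box.swap, hR, mul_right_comm]

lemma applyDet_swap (fA fB : Fin 2 → Fin 2) (gA gB : Fin 2 → Fin 2 → Fin 2) (R : Box) :
    (applyDet fA fB gA gB R).swap = applyDet fB fA gB gA R.swap := by
  ext x y s t
  simp only [Box.swap, applyDet]
  rw [sum_comm]
  simp only [mul_comm]

lemma isFree_applyDet_const (c : Fin 2) (fB : Fin 2 → Fin 2) (gA gB : Fin 2 → Fin 2 → Fin 2)
    {R : Box} (hR : IsBox R) : IsFree (applyDet (fun _ => c) fB gA gB R) := by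
  obtain ⟨hpos, hnorm, hnsA, -⟩ := hR
  -- Alice's raw outcome `l` on input `c` is the hidden variable.
  refine isFree_of_eq_sum_ite_mul gA
    (fun l y' t' => ∑ y, (if gB y t' = y' then 1 else 0) * R l y c (fB t'))
    (fun l y t => sum_nonneg fun y _ => mul_nonneg (by positivity) (hpos _ _ _ _))
    (fun l t t' => ?_) ?_ (fun x y s t => ?_)
  · simp only [sum_sum_ite_eq_mul]
    exact hnsA l c (fB t) (fB t')
  · simp only [sum_sum_ite_eq_mul]
    exact hnorm c (fB 0)
  · simp only [applyDet, mul_sum, mul_assoc]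

lemma applyDet_update_of_forall_eq (fA fB : Fin 2 → Fin 2) (gA gB : Fin 2 → Fin 2 → Fin 2)
    {R : Box} (hR : IsBox R) {s₀ k : Fin 2} (hg : ∀ x, gA x s₀ = k) (a : Fin 2) :
    applyDet (Function.update fA s₀ a) fB gA gB R = applyDet fA fB gA gB R := by
  obtain ⟨-, -, -, hnsB⟩ := hR
  ext x' y' s' t'
  by_cases hs : s' = s₀
  · subst hs
    -- Alice's output on `s'` is fixed, so only Bob's marginal enters,
    -- and by no-signalling it ignores Alice's input.
    have hmarg : ∀ u, ∑ x, ∑ y, (if gA x s' = x' then (1 : ℝ) else 0) *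
        (if gB y t' = y' then 1 else 0) * R x y u (fB t') =
        (if k = x' then 1 else 0) *
          ∑ y, (if gB y t' = y' then 1 else 0) * ∑ x, R x y u (fB t') := by
      intro u
      rw [sum_comm]
      simp only [hg, mul_sum, mul_assoc]
    simp only [applyDet, Function.update_self, hmarg, hnsB _ _ a (fA s')]
  · simp only [applyDet, Function.update_of_ne hs]

lemma isFree_applyDet_of_not_bijective_alice (fA fB : Fin 2 → Fin 2)
    (gA gB : Fin 2 → Fin 2 → Fin 2) {R : Box} (hR : IsBox R)
    (h : ¬ (Function.Bijective fA ∧ ∀ s, Function.Bijective (fun x => gA x s))) :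
    IsFree (applyDet fA fB gA gB R) := by
  have of_const :
      ∀ fA : Fin 2 → Fin 2, (∀ s, fA s = fA 0) → IsFree (applyDet fA fB gA gB R) := by
    intro fA hf
    rw [show fA = fun _ => fA 0 from funext hf]
    exact isFree_applyDet_const _ fB gA gB hR
  rcases not_and_or.1 h with hf | hg
  · exact of_const fA (Fin.two_eq_const_of_not_bijective hf)
  · obtain ⟨s₀, hs₀⟩ := not_forall.1 hg
    rw [← applyDet_update_of_forall_eq fA fB gA gB hR (Fin.two_eq_const_of_not_bijective hs₀)
      (fA (s₀ + 1))]
    refine of_const _ fun s => ?_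
    fin_cases s₀ <;> fin_cases s <;> simp [Function.update]

lemma isFree_applyDet_of_not_bijective_bob (fA fB : Fin 2 → Fin 2)
    (gA gB : Fin 2 → Fin 2 → Fin 2) {R : Box} (hR : IsBox R)
    (h : ¬ (Function.Bijective fB ∧ ∀ t, Function.Bijective (fun y => gB y t))) :
    IsFree (applyDet fA fB gA gB R) := by
  have h_swap := (isFree_applyDet_of_not_bijective_alice fB fA gB gA hR.swap h).swap
  rwa [← applyDet_swap] at h_swap

/-- Every type-preserving locally deterministic operation on CHSH-type boxes that is
not a local symmetry maps every no-signalling box to a free box; hence no nonfree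
CHSH-type box has a preimage under such an operation. -/
theorem stmt_14 (fA fB : Fin 2 → Fin 2) (gA gB : Fin 2 → Fin 2 → Fin 2)
    (hnotsym : ¬ (Function.Bijective fA ∧ Function.Bijective fB ∧
      (∀ s, Function.Bijective (fun x => gA x s)) ∧
      (∀ t, Function.Bijective (fun y => gB y t)))) :
    (∀ R : Box, IsBox R → IsFree (applyDet fA fB gA gB R)) ∧
    (∀ R : Box, IsBox R → ¬ IsFree R →
      ¬ ∃ R' : Box, IsBox R' ∧ applyDet fA fB gA gB R' = R) := by
  have hfree : ∀ R : Box, IsBox R → IsFree (applyDet fA fB gA gB R) := by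
    intro R hR
    by_cases hA : Function.Bijective fA ∧ ∀ s, Function.Bijective (fun x => gA x s)
    · exact isFree_applyDet_of_not_bijective_bob fA fB gA gB hR
        fun hB => hnotsym ⟨hA.1, hB.1, hA.2, hB.2⟩
    · exact isFree_applyDet_of_not_bijective_alice fA fB gA gB hR hA
  refine ⟨hfree, ?_⟩
  rintro R - hR_nonfree ⟨R', hR', rfl⟩
  exact hR_nonfree (hfree R' hR')

end
end

section
/- There exist CHSH-type boxes R_1, R_2, R_3 such that R_1 and R_2 are incomparable under LOSR, R_2 and R_3 are incomparable under LOSR, but R_1 converts to R_3 under LOSR with R_3 not converting to R_1. Hence the incomparability relation of the LOSR pre-order on common-cause boxes is not transitive (the pre-order is not a weak order), and in particular the pre-order is not total. -/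
open Finset

noncomputable section

/-- A type-preserving operation on CHSH-type boxes: `τ x' y' s t x y s' t'`. -/
abbrev Op : Type :=
  Fin 2 → Fin 2 → Fin 2 → Fin 2 → Fin 2 → Fin 2 → Fin 2 → Fin 2 → ℝ

/-- An LOSR operation (local operations and shared randomness). -/
def IsLOSR (τ : Op) : Prop :=
  ∃ (n : ℕ) (p : Fin n → ℝ)
    (pA pB : Fin n → Fin 2 → Fin 2 → Fin 2 → Fin 2 → ℝ),
    (∀ i, 0 ≤ p i) ∧ (∑ i, p i = 1) ∧
    (∀ i x' s x s', 0 ≤ pA i x' s x s') ∧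
    (∀ i x s', ∑ x', ∑ s, pA i x' s x s' = 1) ∧
    (∀ i y' t y t', 0 ≤ pB i y' t y t') ∧
    (∀ i y t', ∑ y', ∑ t, pB i y' t y t' = 1) ∧
    (∀ i x₁ x₂ s s', ∑ x', pA i x' s x₁ s' = ∑ x', pA i x' s x₂ s') ∧
    (∀ i y₁ y₂ t t', ∑ y', pB i y' t y₁ t' = ∑ y', pB i y' t y₂ t') ∧
    (∀ x' y' s t x y s' t',
      τ x' y' s t x y s' t' = ∑ i, p i * pA i x' s x s' * pB i y' t y t')

def applyOp (τ : Op) (R : Box) : Box := fun x' y' s' t' =>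
  ∑ x, ∑ y, ∑ s, ∑ t, τ x' y' s t x y s' t' * R x y s t

def Conv (R R' : Box) : Prop := ∃ τ : Op, IsLOSR τ ∧ applyOp τ R = R'


/-!
The witnesses lie in the family `R(α, γ) = γ L* + (1 - γ) (α PR + (1 - α) L_NPR)`. The
obstruction to conversions is the family of monotones `CHSH + κ · (sum of the four marginal
biases)`, `κ ≥ 0`.

Every LOSR operation is a convex mixture of pairs of deterministic local wirings: on her new input
`s'` a party queries the old box with some input `s` and relabels its output by a function of
`s'`. If both wirings are relabellings (bijective on inputs and on outputs), every CHSH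
expression of the new box is a CHSH expression of the old one and its marginal biases are, up to
sign, those of the old box. Otherwise some party either queries a single old input, or answers
one of her inputs deterministically, in which case that input may as well query the other one;
then all her outcomes are post-processings of a single measurement, and every CHSH expression of
the new box is at most `2`. Hence the monotone
of the output box is at most `max (2 + 4κ) (c + 4κm)`, where `c` bounds the CHSH expressions
and `m` the marginal biases of the input box.

On `R(α, γ)` the monotone is `2 + 2α(1 - γ) + 4κγ`; the values `κ = 0` and `κ = 1/3` separate
`R(1, 1/2)`, `R(3/4, 0)` and `R(1, 3/5)`, while mixing in `L*` turns `R(1, 1/2)` into `R(1, 3/5)`.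
-/

theorem Fintype.sum_prod_mul_apply {ι κ M : Type*} [Fintype ι] [DecidableEq ι] [Fintype κ]
    [CommSemiring M] (g : ι → κ → M) (hg : ∀ i, ∑ c, g i c = 1) (j : ι) (φ : κ → M) :
    ∑ f : ι → κ, (∏ i, g i (f i)) * φ (f j) = ∑ c, g j c * φ c := by
  let h : ι → κ → M := fun i c => g i c * if i = j then φ c else 1
  have hprod (f : ι → κ) : (∏ i, g i (f i)) * φ (f j) = ∏ i, h i (f i) := by
    simp only [h, prod_mul_distrib, prod_ite_eq']
  simp_rw [hprod, ← Fintype.prod_sum]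
  rw [Finset.prod_eq_single j (fun i _ hij => by simp [h, hij, hg]) (by simp)]
  simp [h]

section LocalOp

variable {α β α' β' : Type*} [Fintype α'] [Fintype β] [Inhabited α]

/-- `q x' s x s'` is the probability of querying the old box with `s` and answering `x'`, given
the new input `s'` and the old output `x`. -/
def IsLocalOp (q : α' → β → α → β' → ℝ) : Prop :=
  (∀ x' s x s', 0 ≤ q x' s x s') ∧ (∀ x s', ∑ x', ∑ s, q x' s x s' = 1) ∧
    ∀ x₁ x₂ s s', ∑ x', q x' s x₁ s' = ∑ x', q x' s x₂ s'

def inputProb (q : α' → β → α → β' → ℝ) (s : β) (s' : β') : ℝ := ∑ x', q x' s default s'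

/-- Where `inputProb q s s' = 0` this is `0 / 0 = 0`; such `(s, s')` get weight `0` in
`stepWeight` below. -/
def outputProb (q : α' → β → α → β' → ℝ) (x' : α') (x : α) (s : β) (s' : β') : ℝ :=
  q x' s x s' / inputProb q s s'

namespace IsLocalOp

variable {q : α' → β → α → β' → ℝ}

lemma inputProb_eq (hq : IsLocalOp q) (x : α) (s : β) (s' : β') :
    inputProb q s s' = ∑ x', q x' s x s' :=
  hq.2.2 _ _ _ _

lemma inputProb_nonneg (hq : IsLocalOp q) (s : β) (s' : β') : 0 ≤ inputProb q s s' :=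
  sum_nonneg fun x' _ => hq.1 x' s default s'

lemma le_inputProb (hq : IsLocalOp q) (x' : α') (s : β) (x : α) (s' : β') :
    q x' s x s' ≤ inputProb q s s' := by
  rw [hq.inputProb_eq x]
  exact single_le_sum (fun y' _ => hq.1 y' s x s') (mem_univ x')

lemma inputProb_mul_outputProb (hq : IsLocalOp q) (x' : α') (x : α) (s : β) (s' : β') :
    inputProb q s s' * outputProb q x' x s s' = q x' s x s' := by
  by_cases h : inputProb q s s' = 0
  · have := hq.le_inputProb x' s x s'
    have := hq.1 x' s x s'
    simp only [outputProb, h, div_zero, mul_zero]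
    linarith
  · exact mul_div_cancel₀ _ h

lemma sum_outputProb (hq : IsLocalOp q) {s : β} {s' : β'} (h : inputProb q s s' ≠ 0) (x : α) :
    ∑ x', outputProb q x' x s s' = 1 := by
  unfold outputProb
  rw [← sum_div, ← hq.inputProb_eq x, div_self h]

end IsLocalOp

variable [Fintype α]

def stepWeight (q : α' → β → α → β' → ℝ) (s' : β') (c : β × (α → α')) : ℝ :=
  inputProb q c.1 s' * ∏ x, outputProb q (c.2 x) x c.1 s'

lemma IsLocalOp.sum_stepWeight [DecidableEq α] {q : α' → β → α → β' → ℝ} (hq : IsLocalOp q)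
    (s' : β') : ∑ c, stepWeight q s' c = 1 := by
  have (s : β) : ∑ f : α → α', stepWeight q s' (s, f) = inputProb q s s' := by
    by_cases h : inputProb q s s' = 0
    · simp [stepWeight, h]
    · simp only [stepWeight, ← mul_sum]
      rw [← Fintype.prod_sum (fun x c => outputProb q c x s s')]
      simp only [hq.sum_outputProb h, prod_const_one, mul_one]
  rw [Fintype.sum_prod_type, sum_congr rfl fun s _ => this s, ← hq.2.1 default s', sum_comm]
  rfl

variable [Fintype β']

/-- `σ s' = (s, f)`: on the new input `s'`, query the old box with `s` and output `f x` when it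
answers `x`. -/
abbrev DetStrategy (α β α' β' : Type*) : Type _ := β' → β × (α → α')

def stratWeight (q : α' → β → α → β' → ℝ) (σ : DetStrategy α β α' β') : ℝ :=
  ∏ s', stepWeight q s' (σ s')

def detOp [DecidableEq β] [DecidableEq α'] (σ : DetStrategy α β α' β') :
    α' → β → α → β' → ℝ :=
  fun x' s x s' => if (σ s').1 = s ∧ (σ s').2 x = x' then 1 else 0

namespace IsLocalOp

variable {q : α' → β → α → β' → ℝ}

lemma stratWeight_nonneg (hq : IsLocalOp q) (σ : DetStrategy α β α' β') :
    0 ≤ stratWeight q σ :=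
  prod_nonneg fun _ _ => mul_nonneg (hq.inputProb_nonneg _ _) <|
    prod_nonneg fun _ _ => div_nonneg (hq.1 _ _ _ _) (hq.inputProb_nonneg _ _)

variable [DecidableEq α] [DecidableEq β']

lemma sum_stratWeight (hq : IsLocalOp q) :
    ∑ σ : DetStrategy α β α' β', stratWeight q σ = 1 := by
  simp only [stratWeight, ← Fintype.prod_sum, hq.sum_stepWeight, prod_const_one]

lemma sum_stratWeight_mul_detOp [DecidableEq β] [DecidableEq α'] (hq : IsLocalOp q)
    (x' : α') (s : β) (x : α) (s' : β') :
    ∑ σ, stratWeight q σ * detOp σ x' s x s' = q x' s x s' := by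
  have hstep : ∑ f : α → α', stepWeight q s' (s, f) * (if f x = x' then 1 else 0) =
      q x' s x s' := by
    by_cases h : inputProb q s s' = 0
    · simp only [stepWeight, h, zero_mul, sum_const_zero]
      rw [← hq.inputProb_mul_outputProb x' x s s', h, zero_mul]
    · simp only [stepWeight, mul_assoc, ← mul_sum]
      rw [Fintype.sum_prod_mul_apply (fun x c => outputProb q c x s s')
        (fun x => hq.sum_outputProb h x) x (fun c => if c = x' then 1 else 0)]
      simp [hq.inputProb_mul_outputProb]
  calc ∑ σ, stratWeight q σ * detOp σ x' s x s'
      = ∑ c, stepWeight q s' c * if c.1 = s ∧ c.2 x = x' then 1 else 0 :=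
        Fintype.sum_prod_mul_apply _ hq.sum_stepWeight s'
          (fun c => if c.1 = s ∧ c.2 x = x' then 1 else 0)
    _ = q x' s x s' := by
        rw [Fintype.sum_prod_type, ← hstep, sum_eq_single s (by simp_all) (by simp)]
        simp

end IsLocalOp

end LocalOp

lemma isLocalOp_detOp {α β α' β' : Type*} [Fintype β] [DecidableEq β] [Fintype α']
    [DecidableEq α'] (σ : DetStrategy α β α' β') : IsLocalOp (detOp σ) := by
  refine ⟨fun x' s x s' => by unfold detOp; split_ifs <;> norm_num, fun x s' => ?_,
    fun x₁ x₂ s s' => ?_⟩ <;> simp [detOp, ite_and]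

abbrev Wiring : Type := DetStrategy (Fin 2) (Fin 2) (Fin 2) (Fin 2)

def localOpPair (qA qB : Fin 2 → Fin 2 → Fin 2 → Fin 2 → ℝ) : Op :=
  fun x' y' s t x y s' t' => qA x' s x s' * qB y' t y t'

def wire (σa σb : Wiring) (R : Box) : Box := applyOp (localOpPair (detOp σa) (detOp σb)) R

lemma wire_apply (σa σb : Wiring) (R : Box) (x' y' s' t' : Fin 2) :
    wire σa σb R x' y' s' t' = ∑ x, ∑ y,
      if (σa s').2 x = x' ∧ (σb t').2 y = y' then R x y (σa s').1 (σb t').1 else 0 := by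
  simp only [wire, applyOp, localOpPair, detOp]
  refine sum_congr rfl fun x _ => sum_congr rfl fun y _ => ?_
  by_cases hx : (σa s').2 x = x' <;> by_cases hy : (σb t').2 y = y' <;> simp [hx, hy]

def applyOpLinear (R : Box) : Op →ₗ[ℝ] Box where
  toFun τ := applyOp τ R
  map_add' τ τ' := by
    funext x' y' s' t'
    simp only [applyOp, Pi.add_apply, add_mul, sum_add_distrib]
  map_smul' c τ := by
    funext x' y' s' t'
    simp only [applyOp, Pi.smul_apply, smul_eq_mul, mul_assoc, mul_sum, RingHom.id_apply]

lemma applyOp_sum {ι : Type*} (s : Finset ι) (w : ι → ℝ) (τ : ι → Op) (R : Box) :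
    applyOp (∑ i ∈ s, w i • τ i) R = ∑ i ∈ s, w i • applyOp (τ i) R := by
  have := map_sum (applyOpLinear R) (fun i => w i • τ i) s
  simp only [map_smul] at this
  exact this

lemma isLOSR_sum_smul_localOpPair {n : ℕ} {p : Fin n → ℝ} (hp0 : ∀ i, 0 ≤ p i)
    (hp1 : ∑ i, p i = 1) {qA qB : Fin n → Fin 2 → Fin 2 → Fin 2 → Fin 2 → ℝ}
    (hA : ∀ i, IsLocalOp (qA i)) (hB : ∀ i, IsLocalOp (qB i)) :
    IsLOSR (∑ i, p i • localOpPair (qA i) (qB i)) :=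
  ⟨n, p, qA, qB, hp0, hp1, fun i => (hA i).1, fun i => (hA i).2.1, fun i => (hB i).1,
    fun i => (hB i).2.1, fun i => (hA i).2.2, fun i => (hB i).2.2,
    fun _ _ _ _ _ _ _ _ => by simp [Finset.sum_apply, localOpPair, mul_assoc]⟩

theorem IsLOSR.exists_eq_sum_wire {τ : Op} (hτ : IsLOSR τ) :
    ∃ (n : ℕ) (w : Fin n × Wiring × Wiring → ℝ), (∀ k, 0 ≤ w k) ∧ ∑ k, w k = 1 ∧
      ∀ R, applyOp τ R = ∑ k, w k • wire k.2.1 k.2.2 R := by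
  obtain ⟨n, p, pA, pB, hp0, hp1, hA0, hA1, hB0, hB1, hANS, hBNS, hτ⟩ := hτ
  have hA (i) : IsLocalOp (pA i) := ⟨hA0 i, hA1 i, hANS i⟩
  have hB (i) : IsLocalOp (pB i) := ⟨hB0 i, hB1 i, hBNS i⟩
  set w : Fin n × Wiring × Wiring → ℝ :=
    fun k => p k.1 * stratWeight (pA k.1) k.2.1 * stratWeight (pB k.1) k.2.2 with hw
  have hτ_eq : τ = ∑ k, w k • localOpPair (detOp k.2.1) (detOp k.2.2) := by
    funext x' y' s t x y s' t'
    simp only [hτ, Finset.sum_apply, Pi.smul_apply, smul_eq_mul, localOpPair, hw,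
      Fintype.sum_prod_type]
    refine sum_congr rfl fun i _ => ?_
    rw [← (hA i).sum_stratWeight_mul_detOp x' s x s',
      ← (hB i).sum_stratWeight_mul_detOp y' t y t', mul_assoc, sum_mul_sum, mul_sum]
    simp only [mul_sum]
    refine sum_congr rfl fun σa _ => sum_congr rfl fun σb _ => ?_
    ring
  refine ⟨n, w, fun k => ?_, ?_, fun R => by rw [hτ_eq, applyOp_sum]; rfl⟩
  · exact mul_nonneg (mul_nonneg (hp0 _) ((hA _).stratWeight_nonneg _))
      ((hB _).stratWeight_nonneg _)
  · simp only [hw, Fintype.sum_prod_type, mul_assoc, ← mul_sum, (hA _).sum_stratWeight,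
      (hB _).sum_stratWeight, mul_one, hp1]

lemma sgn_eq_one_or (a : Fin 2) : sgn a = 1 ∨ sgn a = -1 := by
  fin_cases a <;> simp [sgn]

lemma abs_sgn (a : Fin 2) : |sgn a| = 1 := by
  rcases sgn_eq_one_or a with h | h <;> simp [h]

lemma sgn_comp_of_injective {f : Fin 2 → Fin 2} (hf : Function.Injective f) :
    sgn ∘ f = sgn (f 0) • sgn := by
  have h10 : f 1 ≠ f 0 := hf.ne (by decide)
  rw [funext_iff, Fin.forall_fin_two]
  simp only [Function.comp_apply, Pi.smul_apply, smul_eq_mul]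
  generalize f 0 = a at *
  generalize f 1 = b at *
  fin_cases a <;> fin_cases b <;> simp_all [sgn]

lemma Fin.injective_two_iff {γ : Type*} {f : Fin 2 → γ} : Function.Injective f ↔ f 0 ≠ f 1 := by
  refine ⟨fun hf h => absurd (hf h) (by decide), fun h a b hab => ?_⟩
  fin_cases a <;> fin_cases b <;> simp_all [eq_comm]

def corrWith (φ ψ : Fin 2 → ℝ) (R : Box) (s t : Fin 2) : ℝ := ∑ x, ∑ y, φ x * ψ y * R x y s t

lemma corr_eq_corrWith (R : Box) (s t : Fin 2) : corr R s t = corrWith sgn sgn R s t := rfl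

def margA (R : Box) (s : Fin 2) : ℝ := corrWith sgn 1 R s 0

def margB (R : Box) (t : Fin 2) : ℝ := corrWith 1 sgn R 0 t

lemma corrWith_smul_left (c : ℝ) (φ ψ : Fin 2 → ℝ) (R : Box) (s t : Fin 2) :
    corrWith (c • φ) ψ R s t = c * corrWith φ ψ R s t := by
  simp only [corrWith, mul_sum, Pi.smul_apply, smul_eq_mul, mul_assoc]

lemma corrWith_smul_right (c : ℝ) (φ ψ : Fin 2 → ℝ) (R : Box) (s t : Fin 2) :
    corrWith φ (c • ψ) R s t = c * corrWith φ ψ R s t := by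
  simp only [corrWith, mul_sum, Pi.smul_apply, smul_eq_mul]
  exact sum_congr rfl fun x _ => sum_congr rfl fun y _ => by ring

lemma corrWith_wire (φ ψ : Fin 2 → ℝ) (σa σb : Wiring) (R : Box) (s' t' : Fin 2) :
    corrWith φ ψ (wire σa σb R) s' t' =
      corrWith (φ ∘ (σa s').2) (ψ ∘ (σb t').2) R (σa s').1 (σb t').1 := by
  calc corrWith φ ψ (wire σa σb R) s' t'
      = ∑ x, ∑ y, ∑ x', ∑ y', if (σa s').2 x = x' ∧ (σb t').2 y = y' then
          φ x' * ψ y' * R x y (σa s').1 (σb t').1 else 0 := by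
        simp only [corrWith, wire_apply, mul_sum, mul_ite, mul_zero]
        refine (sum_congr rfl fun x' _ => sum_comm).trans sum_comm |>.trans ?_
        exact sum_congr rfl fun x _ => (sum_congr rfl fun x' _ => sum_comm).trans sum_comm
    _ = _ := by simp [corrWith, ite_and]

lemma abs_corrWith_le_one {R : Box} (hR : IsBox R) {φ ψ : Fin 2 → ℝ} (hφ : ∀ x, |φ x| ≤ 1)
    (hψ : ∀ y, |ψ y| ≤ 1) (s t : Fin 2) : |corrWith φ ψ R s t| ≤ 1 := by
  calc |corrWith φ ψ R s t| ≤ ∑ x, ∑ y, |φ x * ψ y * R x y s t| :=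
        (abs_sum_le_sum_abs _ _).trans (sum_le_sum fun x _ => abs_sum_le_sum_abs _ _)
    _ ≤ ∑ x, ∑ y, R x y s t := by
        gcongr with x _ y _
        rw [abs_mul, abs_mul, abs_of_nonneg (hR.1 x y s t)]
        exact mul_le_of_le_one_left (hR.1 x y s t) (mul_le_one₀ (hφ x) (abs_nonneg _) (hψ y))
    _ = 1 := hR.2.1 s t

lemma abs_corrWith_wire_le_one {R : Box} (hR : IsBox R) {φ ψ : Fin 2 → ℝ}
    (hφ : ∀ x, |φ x| ≤ 1) (hψ : ∀ y, |ψ y| ≤ 1) (σa σb : Wiring) (s' t' : Fin 2) :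
    |corrWith φ ψ (wire σa σb R) s' t'| ≤ 1 := by
  rw [corrWith_wire]
  exact abs_corrWith_le_one hR (fun _ => hφ _) (fun _ => hψ _) _ _

lemma corrWith_one_right_eq {R : Box} (hR : IsBox R) (φ : Fin 2 → ℝ) (s t t' : Fin 2) :
    corrWith φ 1 R s t = corrWith φ 1 R s t' := by
  simp only [corrWith, Pi.one_apply, mul_one, ← mul_sum, hR.2.2.1 _ s t t']

def swapBox (R : Box) : Box := fun x y s t => R y x t s

lemma IsBox.swapBox {R : Box} (hR : IsBox R) : IsBox (swapBox R) := by
  refine ⟨fun x y s t => hR.1 y x t s, fun s t => ?_, fun x s t t' => hR.2.2.2 x s t t',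
    fun y t s s' => hR.2.2.1 y t s s'⟩
  rw [sum_comm]
  exact hR.2.1 t s

lemma corrWith_swapBox (φ ψ : Fin 2 → ℝ) (R : Box) (s t : Fin 2) :
    corrWith φ ψ (swapBox R) s t = corrWith ψ φ R t s := by
  rw [corrWith, sum_comm]
  simp only [corrWith, swapBox, mul_comm (φ _)]

lemma margA_swapBox (R : Box) : margA (swapBox R) = margB R :=
  funext fun t => corrWith_swapBox _ _ R t 0

lemma margB_swapBox (R : Box) : margB (swapBox R) = margA R :=
  funext fun s => corrWith_swapBox _ _ R 0 s

lemma CHSHk_swapBox (σ : Fin 2 → Fin 2 → ℝ) (R : Box) :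
    CHSHk σ (swapBox R) = CHSHk (fun s t => σ t s) R := by
  simp only [CHSHk, corr_eq_corrWith, corrWith_swapBox]
  exact sum_comm

lemma wire_swapBox (σa σb : Wiring) (R : Box) :
    wire σa σb (swapBox R) = swapBox (wire σb σa R) := by
  funext x' y' s' t'
  simp only [wire_apply, swapBox, and_comm]
  exact sum_comm

lemma isSignPattern_iff_prod {σ : Fin 2 → Fin 2 → ℝ} :
    IsSignPattern σ ↔ (∀ s t, σ s t = 1 ∨ σ s t = -1) ∧ ∏ s, ∏ t, σ s t = -1 := by
  simp only [IsSignPattern, Fin.prod_univ_two]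
  constructor <;> rintro ⟨h, hp⟩ <;> exact ⟨h, by linear_combination hp⟩

namespace IsSignPattern

variable {σ : Fin 2 → Fin 2 → ℝ}

lemma comp_perm (hσ : IsSignPattern σ) (e f : Equiv.Perm (Fin 2)) :
    IsSignPattern fun s t => σ (e s) (f t) := by
  rw [isSignPattern_iff_prod] at hσ ⊢
  refine ⟨fun s t => hσ.1 _ _, ?_⟩
  calc ∏ s, ∏ t, σ (e s) (f t) = ∏ s, ∏ t, σ (e s) t :=
        prod_congr rfl fun s _ => Equiv.prod_comp f (σ (e s))
    _ = ∏ s, ∏ t, σ s t := Equiv.prod_comp e fun s => ∏ t, σ s t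
    _ = -1 := hσ.2

lemma mul_signs (hσ : IsSignPattern σ) {a b : Fin 2 → ℝ} (ha : ∀ s, a s = 1 ∨ a s = -1)
    (hb : ∀ t, b t = 1 ∨ b t = -1) : IsSignPattern fun s t => σ s t * a s * b t := by
  have hsq {c : ℝ} (hc : c = 1 ∨ c = -1) : c * c = 1 := by rcases hc with rfl | rfl <;> norm_num
  refine ⟨fun s t => ?_, ?_⟩
  · rcases hσ.1 s t with h | h <;> rcases ha s with h' | h' <;> rcases hb t with h'' | h'' <;>
      simp [h, h', h'']
  · have hsigns : a 0 * a 0 * (a 1 * a 1) * (b 0 * b 0) * (b 1 * b 1) = 1 := by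
      rw [hsq (ha 0), hsq (ha 1), hsq (hb 0), hsq (hb 1)]
      norm_num
    linear_combination (a 0 * a 0 * (a 1 * a 1) * (b 0 * b 0) * (b 1 * b 1)) * hσ.2 - hsigns

lemma sum_abs_sum_mul_eq_two (hσ : IsSignPattern σ) {a : Fin 2 → ℝ}
    (ha : ∀ s, a s = 1 ∨ a s = -1) : ∑ t, |∑ s, σ s t * a s| = 2 := by
  obtain ⟨hσ, hprod⟩ := hσ
  simp only [Fin.sum_univ_two]
  rcases hσ 0 0 with h₀₀ | h₀₀ <;> rcases hσ 0 1 with h₀₁ | h₀₁ <;>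
    rcases hσ 1 0 with h₁₀ | h₁₀ <;> rcases hσ 1 1 with h₁₁ | h₁₁ <;>
    rcases ha 0 with h₀ | h₀ <;> rcases ha 1 with h₁ | h₁ <;>
    simp only [h₀₀, h₀₁, h₁₀, h₁₁, h₀, h₁] at hprod ⊢ <;> revert hprod <;> norm_num

end IsSignPattern

def IsRelabelling (σ : Wiring) : Prop :=
  Function.Injective (fun s' => (σ s').1) ∧ ∀ s', Function.Injective (σ s').2

lemma CHSHk_wire_of_isRelabelling {σ : Fin 2 → Fin 2 → ℝ} (hσ : IsSignPattern σ)
    {σa σb : Wiring} (ha : IsRelabelling σa) (hb : IsRelabelling σb) (R : Box) :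
    ∃ σ', IsSignPattern σ' ∧ CHSHk σ (wire σa σb R) = CHSHk σ' R := by
  set εa : Fin 2 → ℝ := fun s' => sgn ((σa s').2 0)
  set εb : Fin 2 → ℝ := fun t' => sgn ((σb t').2 0)
  have hcorr (s' t') :
      corr (wire σa σb R) s' t' = εa s' * εb t' * corr R (σa s').1 (σb t').1 := by
    rw [corr_eq_corrWith, corrWith_wire, sgn_comp_of_injective (ha.2 s'),
      sgn_comp_of_injective (hb.2 t'), corrWith_smul_left, corrWith_smul_right,
      corr_eq_corrWith, mul_assoc]
  let ea := Equiv.ofBijective _ ha.1.bijective_of_finite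
  let eb := Equiv.ofBijective _ hb.1.bijective_of_finite
  refine ⟨fun s t => σ (ea.symm s) (eb.symm t) * εa (ea.symm s) * εb (eb.symm t),
    (hσ.mul_signs (a := εa) (b := εb) (fun _ => sgn_eq_one_or _)
      (fun _ => sgn_eq_one_or _)).comp_perm ea.symm eb.symm, ?_⟩
  rw [CHSHk, CHSHk]
  conv_rhs => rw [← Equiv.sum_comp ea]
  refine sum_congr rfl fun s' _ => ?_
  conv_rhs => rw [← Equiv.sum_comp eb]
  refine sum_congr rfl fun t' _ => ?_
  simp only [hcorr, Equiv.symm_apply_apply]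
  rw [Equiv.ofBijective_apply, Equiv.ofBijective_apply]
  ring

lemma CHSHk_wire_le_two_of_input_eq {R : Box} (hR : IsBox R) {σ : Fin 2 → Fin 2 → ℝ}
    (hσ : IsSignPattern σ) {σa : Wiring} {s : Fin 2} (hs : ∀ s', (σa s').1 = s)
    (σb : Wiring) : CHSHk σ (wire σa σb R) ≤ 2 := by
  set A : Fin 2 → Fin 2 → ℝ := fun t' x => ∑ s', σ s' t' * sgn ((σa s').2 x)
  have hA (x) : ∑ t', |A t' x| = 2 := hσ.sum_abs_sum_mul_eq_two fun _ => sgn_eq_one_or _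
  calc CHSHk σ (wire σa σb R)
      = ∑ t', ∑ x, ∑ y, A t' x * sgn ((σb t').2 y) * R x y s (σb t').1 := by
        simp only [CHSHk, corr_eq_corrWith, corrWith_wire, hs]
        simp only [corrWith, A, Fin.sum_univ_two, Function.comp_apply]
        ring
    _ ≤ ∑ t', ∑ x, ∑ y, |A t' x| * R x y s (σb t').1 := by
        refine sum_le_sum fun t' _ => sum_le_sum fun x _ => sum_le_sum
          fun y _ => mul_le_mul_of_nonneg_right ?_ (hR.1 _ _ _ _)
        calc A t' x * sgn ((σb t').2 y) ≤ |A t' x * sgn ((σb t').2 y)| := le_abs_self _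
          _ = |A t' x| := by rw [abs_mul, abs_sgn, mul_one]
    _ = ∑ x, (∑ t', |A t' x|) * ∑ y, R x y s 0 := by
        simp only [← mul_sum, hR.2.2.1 _ s _ 0, sum_mul]
        exact sum_comm
    _ = 2 := by simp only [hA, ← mul_sum, hR.2.1, mul_one]

lemma wire_eq_of_input_eq_or_output_const {R : Box} (hR : IsBox R) {σa : Wiring} {s : Fin 2}
    (h : ∀ s', (σa s').1 = s ∨ (σa s').2 0 = (σa s').2 1) (σb : Wiring) :
    wire σa σb R = wire (fun s' => (s, (σa s').2)) σb R := by
  funext x' y' s' t'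
  rw [wire_apply, wire_apply]
  rcases h s' with h | h
  · rw [h]
  -- With a constant answer only Bob's marginal enters, and it does not depend on Alice's input.
  have hc (x) : (σa s').2 x = (σa s').2 0 := by fin_cases x <;> simp [h]
  simp only [hc, ite_and, sum_ite_irrel]
  congr 1
  rw [sum_comm, sum_comm (s := univ) (t := univ) (f := fun x y => ite _ (R x y s _) 0)]
  simp only [sum_ite_irrel, hR.2.2.2 _ _ (σa s').1 s]

lemma exists_input_eq_or_output_const_of_not_isRelabelling {σa : Wiring} (h : ¬ IsRelabelling σa) :
    ∃ s, ∀ s', (σa s').1 = s ∨ (σa s').2 0 = (σa s').2 1 := by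
  simp only [IsRelabelling, Fin.injective_two_iff, not_and_or, not_not, not_forall] at h
  rcases h with h | ⟨s'₀, h⟩
  · exact ⟨(σa 0).1, fun s' => by fin_cases s' <;> simp [h]⟩
  · refine ⟨(σa (s'₀ + 1)).1, fun s' => ?_⟩
    fin_cases s'₀ <;> fin_cases s' <;> simp_all

lemma CHSHk_wire_le_two {R : Box} (hR : IsBox R) {σ : Fin 2 → Fin 2 → ℝ} (hσ : IsSignPattern σ)
    {σa : Wiring} (ha : ¬ IsRelabelling σa) (σb : Wiring) : CHSHk σ (wire σa σb R) ≤ 2 := by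
  obtain ⟨s, hs⟩ := exists_input_eq_or_output_const_of_not_isRelabelling ha
  rw [wire_eq_of_input_eq_or_output_const hR hs]
  exact CHSHk_wire_le_two_of_input_eq (σa := fun s' => (s, (σa s').2)) hR hσ (fun _ => rfl) σb

def chshSigns : Fin 2 → Fin 2 → ℝ := fun s t => if s = 1 ∧ t = 1 then -1 else 1

lemma isSignPattern_chshSigns : IsSignPattern chshSigns :=
  ⟨fun s t => by unfold chshSigns; split_ifs <;> simp, by norm_num [chshSigns]⟩

def biasedCHSH (κ : ℝ) : Box →ₗ[ℝ] ℝ where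
  toFun R := CHSHk chshSigns R + κ * ∑ s, (margA R s + margB R s)
  map_add' R R' := by
    simp only [CHSHk, corr, margA, margB, corrWith, Pi.add_apply, mul_add, sum_add_distrib]
    ring
  map_smul' c R := by
    simp only [CHSHk, corr, margA, margB, corrWith, Pi.smul_apply, smul_eq_mul, mul_sum,
      RingHom.id_apply, mul_add, mul_left_comm c]

lemma biasedCHSH_swapBox (κ : ℝ) (R : Box) : biasedCHSH κ (swapBox R) = biasedCHSH κ R := by
  have hsymm : (fun s t => chshSigns t s) = chshSigns := by
    funext s t
    simp only [chshSigns, and_comm]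
  simp only [biasedCHSH, LinearMap.coe_mk, AddHom.coe_mk, CHSHk_swapBox, hsymm, margA_swapBox,
    margB_swapBox, add_comm (margB R _)]

lemma biasedCHSH_le {κ c m : ℝ} (hκ : 0 ≤ κ) {R : Box} (hc : CHSHk chshSigns R ≤ c)
    (hA : ∀ s, |margA R s| ≤ m) (hB : ∀ t, |margB R t| ≤ m) :
    biasedCHSH κ R ≤ c + 4 * κ * m := by
  have hmarg : ∑ s, (margA R s + margB R s) ≤ 4 * m := by
    simp only [Fin.sum_univ_two]
    linarith [(abs_le.mp (hA 0)).2, (abs_le.mp (hA 1)).2, (abs_le.mp (hB 0)).2,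
      (abs_le.mp (hB 1)).2]
  have := mul_le_mul_of_nonneg_left hmarg hκ
  simp only [biasedCHSH, LinearMap.coe_mk, AddHom.coe_mk]
  linarith

lemma biasedCHSH_wire_le_of_not_isRelabelling {R : Box} (hR : IsBox R) {κ : ℝ} (hκ : 0 ≤ κ)
    {σa : Wiring} (ha : ¬ IsRelabelling σa) (σb : Wiring) :
    biasedCHSH κ (wire σa σb R) ≤ 2 + 4 * κ := by
  have hsgn (x : Fin 2) : |sgn x| ≤ 1 := (abs_sgn x).le
  have hone (x : Fin 2) : |(1 : Fin 2 → ℝ) x| ≤ 1 := by simp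
  simpa using biasedCHSH_le hκ (CHSHk_wire_le_two hR isSignPattern_chshSigns ha σb)
    (fun s => abs_corrWith_wire_le_one hR hsgn hone σa σb s 0)
    (fun t => abs_corrWith_wire_le_one hR hone hsgn σa σb 0 t)

lemma abs_margA_wire {R : Box} (hR : IsBox R) {σa : Wiring} {s' : Fin 2}
    (ha : Function.Injective (σa s').2) (σb : Wiring) :
    |margA (wire σa σb R) s'| = |margA R (σa s').1| := by
  rw [margA, corrWith_wire, sgn_comp_of_injective ha, Pi.one_comp, corrWith_smul_left, abs_mul,
    abs_sgn, one_mul, margA, corrWith_one_right_eq hR]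

lemma biasedCHSH_wire_le_of_isRelabelling {R : Box} (hR : IsBox R) {κ c m : ℝ} (hκ : 0 ≤ κ)
    (hc : ∀ σ, IsSignPattern σ → CHSHk σ R ≤ c) (hA : ∀ s, |margA R s| ≤ m)
    (hB : ∀ t, |margB R t| ≤ m) {σa σb : Wiring} (ha : IsRelabelling σa)
    (hb : IsRelabelling σb) : biasedCHSH κ (wire σa σb R) ≤ c + 4 * κ * m := by
  obtain ⟨σ', hσ', hCHSH⟩ := CHSHk_wire_of_isRelabelling isSignPattern_chshSigns ha hb R
  refine biasedCHSH_le hκ (hCHSH ▸ hc σ' hσ') (fun s' => ?_) (fun t' => ?_)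
  · exact (abs_margA_wire hR (ha.2 s') σb).trans_le (hA _)
  · rw [← margA_swapBox, ← wire_swapBox]
    exact (abs_margA_wire hR.swapBox (hb.2 t') σa).trans_le (margA_swapBox R ▸ hB _)

theorem biasedCHSH_applyOp_le {R : Box} (hR : IsBox R) {κ c m : ℝ} (hκ : 0 ≤ κ)
    (hc : ∀ σ, IsSignPattern σ → CHSHk σ R ≤ c) (hA : ∀ s, |margA R s| ≤ m)
    (hB : ∀ t, |margB R t| ≤ m) {τ : Op} (hτ : IsLOSR τ) :
    biasedCHSH κ (applyOp τ R) ≤ max (2 + 4 * κ) (c + 4 * κ * m) := by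
  obtain ⟨n, w, hw0, hw1, hτR⟩ := hτ.exists_eq_sum_wire
  have hwire (σa σb : Wiring) :
      biasedCHSH κ (wire σa σb R) ≤ max (2 + 4 * κ) (c + 4 * κ * m) := by
    by_cases ha : IsRelabelling σa
    · by_cases hb : IsRelabelling σb
      · exact (biasedCHSH_wire_le_of_isRelabelling hR hκ hc hA hB ha hb).trans
          (le_max_right _ _)
      · rw [← biasedCHSH_swapBox, ← wire_swapBox]
        exact (biasedCHSH_wire_le_of_not_isRelabelling hR.swapBox hκ hb σa).trans
          (le_max_left _ _)
    · exact (biasedCHSH_wire_le_of_not_isRelabelling hR hκ ha σb).trans (le_max_left _ _)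
  calc biasedCHSH κ (applyOp τ R) = ∑ k, w k * biasedCHSH κ (wire k.2.1 k.2.2 R) := by
        simp only [hτR, map_sum, map_smul, smul_eq_mul]
    _ ≤ ∑ k, w k * max (2 + 4 * κ) (c + 4 * κ * m) :=
        sum_le_sum fun k _ => mul_le_mul_of_nonneg_left (hwire _ _) (hw0 k)
    _ = max (2 + 4 * κ) (c + 4 * κ * m) := by rw [← sum_mul, hw1, one_mul]

/-- In `Fin 2`, `x + y` is the XOR and `s * t` the AND of the bits. -/
def prBox : Box := fun x y s t => if x + y = s * t then 1 / 2 else 0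

def lStar : Box := fun x y _ _ => if x = 0 ∧ y = 0 then 1 else 0

def lNPR : Box := fun x y _ _ => if x = y then 1 / 2 else 0

lemma wire_id (R : Box) : wire (fun s' => (s', id)) (fun t' => (t', id)) R = R := by
  funext x' y' s' t'
  simp [wire_apply, ite_and]

lemma wire_const_zero {R : Box} (hR : IsBox R) :
    wire (fun s' => (s', fun _ => 0)) (fun t' => (t', fun _ => 0)) R = lStar := by
  funext x' y' s' t'
  simp only [wire_apply, lStar, eq_comm (a := (0 : Fin 2))]
  split_ifs
  · exact hR.2.1 s' t'
  · simp

lemma conv_smul_add_lStar {R : Box} (hR : IsBox R) {l : ℝ} (hl0 : 0 ≤ l) (hl1 : l ≤ 1) :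
    Conv R (l • R + (1 - l) • lStar) := by
  let σ : Fin 2 → Wiring := ![fun s' => (s', id), fun s' => (s', fun _ => 0)]
  refine ⟨∑ i, ![l, 1 - l] i • localOpPair (detOp (σ i)) (detOp (σ i)),
    isLOSR_sum_smul_localOpPair (fun i => by fin_cases i <;> simp [hl0, hl1]) (by simp)
      (fun i => isLocalOp_detOp _) (fun i => isLocalOp_detOp _), ?_⟩
  rw [applyOp_sum, Fin.sum_univ_two]
  exact congr_arg₂ _ (congr_arg _ (wire_id R)) (congr_arg _ (wire_const_zero hR))

lemma Fin.one_add_one_eq_zero : (1 + 1 : Fin 2) = 0 := rfl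

/-- The paper's `R(α, γ) = γ L* + (1 - γ) C(α)` with `C(α) = α R_PR + (1 - α) L_NPR`. -/
def chshFamily (α γ : ℝ) : Box := γ • lStar + (1 - γ) • (α • prBox + (1 - α) • lNPR)

lemma isBox_chshFamily {α γ : ℝ} (hα : α ∈ Set.Icc (0 : ℝ) 1) (hγ : γ ∈ Set.Icc (0 : ℝ) 1) :
    IsBox (chshFamily α γ) := by
  obtain ⟨hα0, hα1⟩ := hα
  obtain ⟨hγ0, hγ1⟩ := hγ
  refine ⟨fun x y s t => ?_, fun s t => ?_, fun x s t t' => ?_, fun y t s s' => ?_⟩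
  · fin_cases x <;> fin_cases y <;> fin_cases s <;> fin_cases t <;>
      norm_num [chshFamily, lStar, prBox, lNPR, Fin.one_add_one_eq_zero] <;> nlinarith
  · fin_cases s <;> fin_cases t <;>
      norm_num [chshFamily, lStar, prBox, lNPR, Fin.one_add_one_eq_zero, Fin.sum_univ_two] <;>
      ring
  · fin_cases x <;> fin_cases s <;> fin_cases t <;> fin_cases t' <;>
      norm_num [chshFamily, lStar, prBox, lNPR, Fin.one_add_one_eq_zero, Fin.sum_univ_two] <;>
      ring
  · fin_cases y <;> fin_cases s <;> fin_cases t <;> fin_cases s' <;>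
      norm_num [chshFamily, lStar, prBox, lNPR, Fin.one_add_one_eq_zero, Fin.sum_univ_two] <;>
      ring

lemma corr_chshFamily (α γ : ℝ) (s t : Fin 2) :
    corr (chshFamily α γ) s t = if s = 1 ∧ t = 1 then γ + (1 - γ) * (1 - 2 * α) else 1 := by
  fin_cases s <;> fin_cases t <;>
    norm_num [corr, chshFamily, lStar, prBox, lNPR, Fin.one_add_one_eq_zero, sgn,
      Fin.sum_univ_two] <;> ring

lemma margA_chshFamily (α γ : ℝ) (s : Fin 2) : margA (chshFamily α γ) s = γ := by
  fin_cases s <;> norm_num [margA, corrWith, chshFamily, lStar, prBox, lNPR,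
    Fin.one_add_one_eq_zero, sgn, Fin.sum_univ_two] <;> ring

lemma margB_chshFamily (α γ : ℝ) (t : Fin 2) : margB (chshFamily α γ) t = γ := by
  fin_cases t <;> norm_num [margB, corrWith, chshFamily, lStar, prBox, lNPR,
    Fin.one_add_one_eq_zero, sgn, Fin.sum_univ_two] <;> ring

lemma CHSHk_chshFamily_le {α γ : ℝ} (hα : α ∈ Set.Icc (0 : ℝ) 1) (hγ : γ ∈ Set.Icc (0 : ℝ) 1)
    {σ : Fin 2 → Fin 2 → ℝ} (hσ : IsSignPattern σ) :
    CHSHk σ (chshFamily α γ) ≤ 2 + 2 * α * (1 - γ) := by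
  obtain ⟨hα0, hα1⟩ := hα
  obtain ⟨hγ0, hγ1⟩ := hγ
  obtain ⟨hσ, hprod⟩ := hσ
  simp only [CHSHk, Fin.sum_univ_two, corr_chshFamily]
  rcases hσ 0 0 with h₀₀ | h₀₀ <;> rcases hσ 0 1 with h₀₁ | h₀₁ <;>
    rcases hσ 1 0 with h₁₀ | h₁₀ <;> rcases hσ 1 1 with h₁₁ | h₁₁ <;>
    simp only [h₀₀, h₀₁, h₁₀, h₁₁] at hprod ⊢ <;> revert hprod <;> norm_num <;>
    nlinarith [mul_nonneg hα0 hγ0, mul_nonneg (sub_nonneg.2 hα1) (sub_nonneg.2 hγ1)]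

lemma biasedCHSH_chshFamily (κ α γ : ℝ) :
    biasedCHSH κ (chshFamily α γ) = 2 + 2 * α * (1 - γ) + 4 * κ * γ := by
  simp only [biasedCHSH, LinearMap.coe_mk, AddHom.coe_mk, CHSHk, chshSigns, Fin.sum_univ_two,
    corr_chshFamily, margA_chshFamily, margB_chshFamily]
  norm_num
  ring

theorem not_conv_chshFamily {α γ α' γ' κ : ℝ} (hα : α ∈ Set.Icc (0 : ℝ) 1)
    (hγ : γ ∈ Set.Icc (0 : ℝ) 1) (hκ : 0 ≤ κ)
    (h : max (2 + 4 * κ) (2 + 2 * α * (1 - γ) + 4 * κ * γ) < 2 + 2 * α' * (1 - γ') + 4 * κ * γ') :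
    ¬ Conv (chshFamily α γ) (chshFamily α' γ') := by
  rintro ⟨τ, hτ, hconv⟩
  have := biasedCHSH_applyOp_le (isBox_chshFamily hα hγ) hκ
    (fun σ hσ => CHSHk_chshFamily_le hα hγ hσ)
    (fun s => by rw [margA_chshFamily, abs_of_nonneg hγ.1])
    (fun t => by rw [margB_chshFamily, abs_of_nonneg hγ.1]) hτ
  rw [hconv, biasedCHSH_chshFamily] at this
  exact this.not_gt h

theorem conv_chshFamily_of_le {α γ γ' : ℝ} (hα : α ∈ Set.Icc (0 : ℝ) 1)
    (hγ : γ ∈ Set.Icc (0 : ℝ) 1) (hγ' : γ ≤ γ') (hγ'1 : γ' ≤ 1) :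
    Conv (chshFamily α γ) (chshFamily α γ') := by
  set l := (1 - γ') / (1 - γ)
  have hl : l * (1 - γ) = 1 - γ' := by
    rcases eq_or_lt_of_le hγ.2 with h | h
    · simp [h, le_antisymm hγ'1 (h ▸ hγ')]
    · exact div_mul_cancel₀ _ (sub_ne_zero.2 h.ne')
  have hmix : chshFamily α γ' = l • chshFamily α γ + (1 - l) • lStar := by
    funext x y s t
    simp only [chshFamily, Pi.add_apply, Pi.smul_apply, smul_eq_mul]
    linear_combination (lStar x y s t - (α * prBox x y s t + (1 - α) * lNPR x y s t)) * hl
  rw [hmix]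
  have hγ1 := hγ.2
  exact conv_smul_add_lStar (isBox_chshFamily hα hγ) (div_nonneg (by linarith) (by linarith))
    (div_le_one_of_le₀ (by linarith) (by linarith))

/-- The incomparability relation of the LOSR pre-order on CHSH-type common-cause boxes
is not transitive (and in particular the pre-order is not total): there are boxes
`R₁, R₂, R₃` with `R₁, R₂` incomparable and `R₂, R₃` incomparable, while `R₁` converts
to `R₃` but not conversely. -/
theorem stmt_16 :
    ∃ R₁ R₂ R₃ : Box, IsBox R₁ ∧ IsBox R₂ ∧ IsBox R₃ ∧
      ¬ Conv R₁ R₂ ∧ ¬ Conv R₂ R₁ ∧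
      ¬ Conv R₂ R₃ ∧ ¬ Conv R₃ R₂ ∧
      Conv R₁ R₃ ∧ ¬ Conv R₃ R₁ := by
  have h₁ : (1 : ℝ) ∈ Set.Icc (0 : ℝ) 1 := by norm_num
  refine ⟨chshFamily 1 (1 / 2), chshFamily (3 / 4) 0, chshFamily 1 (3 / 5),
    isBox_chshFamily h₁ (by norm_num), isBox_chshFamily (by norm_num) (by norm_num),
    isBox_chshFamily h₁ (by norm_num), ?_, ?_, ?_, ?_,
    conv_chshFamily_of_le h₁ (by norm_num) (by norm_num) (by norm_num), ?_⟩
  · exact not_conv_chshFamily (κ := 0) h₁ (by norm_num) le_rfl (by norm_num)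
  · exact not_conv_chshFamily (κ := 1 / 3) (by norm_num) (by norm_num) (by norm_num) (by norm_num)
  · exact not_conv_chshFamily (κ := 1 / 3) (by norm_num) (by norm_num) (by norm_num) (by norm_num)
  · exact not_conv_chshFamily (κ := 0) h₁ (by norm_num) le_rfl (by norm_num)
  · exact not_conv_chshFamily (κ := 1 / 3) h₁ (by norm_num) (by norm_num) (by norm_num)

end
end
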